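/- Inversion solves pattern equations: if Γ ⊢ s : Γ' is a strong typing of a pattern substitution, Γ ⊢ M : A, every logic variable in M is of base type, X does not occur in M, and every variable occurring in M also occurs in s, then the instantiation X ← M[s⁻¹] is well-typed (Γ' ⊢ M[s⁻¹] : A) and solves the equation X[s] ≐ M, i.e. (M[s⁻¹])[s] = M. -/

import Mathlib

/-!
Under strong typing, the codomain `Γ'` of a pattern substitution `s` is exactly the context that
`s` picks out of `Γ`: each entry passes on the assumption it names with its flag unchanged (a
used-affine entry over an affine assumption could be retyped as affine, which strong typing
forbids). The inverse `s⁻¹` sends the variable of the `i`-th entry back to `i`, so it undoes `s`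
on every variable occurring in `M`. An induction on the typing of `M`, extending both
substitutions under binders, then shows that `M[s⁻¹]` is typed in the context picked out by `s`
and that `M[s⁻¹][s] = M`: picking out commutes with splitting and with taking the intuitionistic
part, and the other assumptions of a variable stay non-linear because `s` is injective.
-/

namespace LinUnif

/-- Linearity flags on variables/terms. -/
inductive Flag | I | A | L
deriving DecidableEq

/-- Context linearity flags: intuitionistic, affine, used affine, linear, used linear. -/
inductive CFlag | i | a | ua | l | ul
deriving DecidableEq

/-- Types of the linear/affine λ-calculus. -/
inductive Ty
  | base (n : ℕ)
  | withT (A B : Ty)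
  | lolli (A B : Ty)
  | affarr (A B : Ty)
  | arr (A B : Ty)
deriving DecidableEq

/-- Contexts: lists of types tagged with context linearity flags (head = de Bruijn index 1). -/
abbrev Ctx := List (Ty × CFlag)

def flagC : Flag → CFlag | .I => .i | .A => .a | .L => .l
def cToF : CFlag → Flag | .i => .I | .a => .A | .ua => .A | .l => .L | .ul => .L

/-- No linear (L) assumptions occur. -/
def NoLin (Γ : Ctx) : Prop := ∀ e ∈ Γ, e.2 ≠ CFlag.l

/-- The intuitionistic part of a context: L ↦ UL, A ↦ UA. -/
def bar (Γ : Ctx) : Ctx :=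
  Γ.map fun e => (e.1, match e.2 with | .l => CFlag.ul | .a => CFlag.ua | c => c)

/-- Context splitting Γ = Γ₁ ⋈ Γ₂. -/
inductive Split : Ctx → Ctx → Ctx → Prop
  | nil : Split [] [] []
  | int {Γ Γ₁ Γ₂ A} : Split Γ Γ₁ Γ₂ → Split ((A,.i)::Γ) ((A,.i)::Γ₁) ((A,.i)::Γ₂)
  | ulin {Γ Γ₁ Γ₂ A} : Split Γ Γ₁ Γ₂ → Split ((A,.ul)::Γ) ((A,.ul)::Γ₁) ((A,.ul)::Γ₂)
  | uaff {Γ Γ₁ Γ₂ A} : Split Γ Γ₁ Γ₂ → Split ((A,.ua)::Γ) ((A,.ua)::Γ₁) ((A,.ua)::Γ₂)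
  | linl {Γ Γ₁ Γ₂ A} : Split Γ Γ₁ Γ₂ → Split ((A,.l)::Γ) ((A,.l)::Γ₁) ((A,.ul)::Γ₂)
  | linr {Γ Γ₁ Γ₂ A} : Split Γ Γ₁ Γ₂ → Split ((A,.l)::Γ) ((A,.ul)::Γ₁) ((A,.l)::Γ₂)
  | affl {Γ Γ₁ Γ₂ A} : Split Γ Γ₁ Γ₂ → Split ((A,.a)::Γ) ((A,.a)::Γ₁) ((A,.ua)::Γ₂)
  | affr {Γ Γ₁ Γ₂ A} : Split Γ Γ₁ Γ₂ → Split ((A,.a)::Γ) ((A,.ua)::Γ₁) ((A,.a)::Γ₂)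

/-- Affine weakening Γ ≻_aff Γ'. -/
def AffWeak (Γ Γ' : Ctx) : Prop := ∃ Γ'', Split Γ Γ'' Γ' ∧ NoLin Γ''

/-- Typing of variables (1-based de Bruijn indices): Γ ⊢ n^f ⇒ A. -/
inductive VarTy : Ctx → ℕ → Flag → Ty → Prop
  | here {Γ A f} : NoLin Γ → VarTy ((A, flagC f)::Γ) 1 f A
  | there {Γ B l n f A} : VarTy Γ n f A → l ≠ CFlag.l → VarTy ((B,l)::Γ) (n+1) f A

/-- Relaxed typing of variables Γ ⊢ᵢ n^f ⇒ A : all variables available,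
    disregarding linearity/affineness (usedness). -/
inductive VarTyR : Ctx → ℕ → Flag → Ty → Prop
  | here {Γ A l f} : cToF l = f → VarTyR ((A,l)::Γ) 1 f A
  | there {Γ B l n f A} : VarTyR Γ n f A → VarTyR ((B,l)::Γ) (n+1) f A

/-- Substitution entries: a de Bruijn index together with its variable flag f'
    and the extension flag f (the entry `n^{f'f}`). A full substitution is a
    list of entries followed by a shift `↑ⁿ`. -/
abbrev SubE := List (ℕ × Flag × Flag)

def shiftE (es : SubE) : SubE := es.map fun e => (e.1+1, e.2)

/-- Typing of substitutions (whose entries are variables): Γ ⊢ es.↑ⁿ : Γ'. -/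
inductive SubTy : Ctx → SubE → ℕ → Ctx → Prop
  | nil : SubTy [] [] 0 []
  | shift {Γ B l n Γ'} : SubTy Γ [] n Γ' → l ≠ CFlag.l → SubTy ((B,l)::Γ) [] (n+1) Γ'
  | consI {Γ m f' A es n Γ'} : VarTy (bar Γ) m f' A → SubTy Γ es n Γ' →
      SubTy Γ ((m,f',Flag.I)::es) n ((A,CFlag.i)::Γ')
  | consL {Γ Γ₁ Γ₂ m f' A es n Γ'} : Split Γ Γ₁ Γ₂ → VarTy Γ₁ m f' A → SubTy Γ₂ es n Γ' →
      SubTy Γ ((m,f',Flag.L)::es) n ((A,CFlag.l)::Γ')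
  | consA {Γ Γ₁ Γ₂ m f' A es n Γ'} : Split Γ Γ₁ Γ₂ → NoLin Γ₁ → VarTy Γ₁ m f' A →
      SubTy Γ₂ es n Γ' → SubTy Γ ((m,f',Flag.A)::es) n ((A,CFlag.a)::Γ')
  | consUL {Γ m f' A es n Γ'} : VarTyR Γ m f' A → SubTy Γ es n Γ' →
      SubTy Γ ((m,f',Flag.L)::es) n ((A,CFlag.ul)::Γ')
  | consUA {Γ m f' A es n Γ'} : VarTyR Γ m f' A → f' ≠ Flag.L → SubTy Γ es n Γ' →
      SubTy Γ ((m,f',Flag.A)::es) n ((A,CFlag.ua)::Γ')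

/-- Pattern substitution: distinct de Bruijn indices, no linear-changing extension. -/
def PatternSub (es : SubE) : Prop :=
  es.Pairwise (fun a b => a.1 ≠ b.1) ∧ ∀ e ∈ es, e.2.1 = e.2.2 ∧ 1 ≤ e.1

/-- Terms (canonical forms), with logic variables `lvar X es sh` under a
    substitution consisting of variable entries `es` and a trailing shift `sh`. -/
inductive Tm
  | var (n : ℕ) (f : Flag)
  | lvar (X : ℕ) (es : SubE) (sh : ℕ)
  | pair (M N : Tm)
  | fst (M : Tm)
  | snd (M : Tm)
  | lamL (M : Tm)
  | lamA (M : Tm)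
  | lamI (M : Tm)
  | appL (M N : Tm)
  | appA (M N : Tm)
  | appI (M N : Tm)
deriving DecidableEq

/-- Bidirectional typing of canonical terms, with assignments ΓX, AX of contexts
    and types to logic variables. -/
inductive HasTy (ΓX : ℕ → Ctx) (AX : ℕ → Ty) : Ctx → Tm → Ty → Prop
  | var {Γ n f A} : VarTy Γ n f A → HasTy ΓX AX Γ (.var n f) A
  | lvar {Γ es sh X} : SubTy Γ es sh (ΓX X) → HasTy ΓX AX Γ (.lvar X es sh) (AX X)
  | pair {Γ M N A B} : HasTy ΓX AX Γ M A → HasTy ΓX AX Γ N B →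
      HasTy ΓX AX Γ (.pair M N) (.withT A B)
  | fst {Γ M A B} : HasTy ΓX AX Γ M (.withT A B) → HasTy ΓX AX Γ (.fst M) A
  | snd {Γ M A B} : HasTy ΓX AX Γ M (.withT A B) → HasTy ΓX AX Γ (.snd M) B
  | lamL {Γ M A B} : HasTy ΓX AX ((A,CFlag.l)::Γ) M B → HasTy ΓX AX Γ (.lamL M) (.lolli A B)
  | lamA {Γ M A B} : HasTy ΓX AX ((A,CFlag.a)::Γ) M B → HasTy ΓX AX Γ (.lamA M) (.affarr A B)
  | lamI {Γ M A B} : HasTy ΓX AX ((A,CFlag.i)::Γ) M B → HasTy ΓX AX Γ (.lamI M) (.arr A B)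
  | appL {Γ Γ₁ Γ₂ M N A B} : Split Γ Γ₁ Γ₂ → HasTy ΓX AX Γ₁ M (.lolli A B) →
      HasTy ΓX AX Γ₂ N A → HasTy ΓX AX Γ (.appL M N) B
  | appA {Γ Γ₁ Γ₂ M N A B} : Split Γ Γ₁ Γ₂ → NoLin Γ₂ → HasTy ΓX AX Γ₁ M (.affarr A B) →
      HasTy ΓX AX Γ₂ N A → HasTy ΓX AX Γ (.appA M N) B
  | appI {Γ M N A B} : HasTy ΓX AX Γ M (.arr A B) → HasTy ΓX AX (bar Γ) N A →
      HasTy ΓX AX Γ (.appI M N) B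

/-- All logic-variable substitutions occurring in a term are pattern substitutions. -/
def PatternTm : Tm → Prop
  | .var _ _ => True
  | .lvar _ es _ => PatternSub es
  | .pair M N => PatternTm M ∧ PatternTm N
  | .fst M => PatternTm M
  | .snd M => PatternTm M
  | .lamL M => PatternTm M
  | .lamA M => PatternTm M
  | .lamI M => PatternTm M
  | .appL M N => PatternTm M ∧ PatternTm N
  | .appA M N => PatternTm M ∧ PatternTm N
  | .appI M N => PatternTm M ∧ PatternTm N

/-- Occurrence n ∈ M of a variable in a term (flexible occurrences included). -/
inductive Occurs : ℕ → Tm → Prop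
  | var {n f} : Occurs n (.var n f)
  | lvar {n X es sh e} : e ∈ es → e.1 = n → Occurs n (.lvar X es sh)
  | pairl {n M N} : Occurs n M → Occurs n (.pair M N)
  | pairr {n M N} : Occurs n N → Occurs n (.pair M N)
  | fst {n M} : Occurs n M → Occurs n (.fst M)
  | snd {n M} : Occurs n M → Occurs n (.snd M)
  | lamL {n M} : Occurs (n+1) M → Occurs n (.lamL M)
  | lamA {n M} : Occurs (n+1) M → Occurs n (.lamA M)
  | lamI {n M} : Occurs (n+1) M → Occurs n (.lamI M)
  | appLl {n M N} : Occurs n M → Occurs n (.appL M N)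
  | appLr {n M N} : Occurs n N → Occurs n (.appL M N)
  | appAl {n M N} : Occurs n M → Occurs n (.appA M N)
  | appAr {n M N} : Occurs n N → Occurs n (.appA M N)
  | appIl {n M N} : Occurs n M → Occurs n (.appI M N)
  | appIr {n M N} : Occurs n N → Occurs n (.appI M N)

/-- Rigid occurrence n ∈_rig M: occurrence not inside a logic variable. -/
inductive RigidOccurs : ℕ → Tm → Prop
  | var {n f} : RigidOccurs n (.var n f)
  | pairl {n M N} : RigidOccurs n M → RigidOccurs n (.pair M N)
  | pairr {n M N} : RigidOccurs n N → RigidOccurs n (.pair M N)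
  | fst {n M} : RigidOccurs n M → RigidOccurs n (.fst M)
  | snd {n M} : RigidOccurs n M → RigidOccurs n (.snd M)
  | lamL {n M} : RigidOccurs (n+1) M → RigidOccurs n (.lamL M)
  | lamA {n M} : RigidOccurs (n+1) M → RigidOccurs n (.lamA M)
  | lamI {n M} : RigidOccurs (n+1) M → RigidOccurs n (.lamI M)
  | appLl {n M N} : RigidOccurs n M → RigidOccurs n (.appL M N)
  | appLr {n M N} : RigidOccurs n N → RigidOccurs n (.appL M N)
  | appAl {n M N} : RigidOccurs n M → RigidOccurs n (.appA M N)
  | appAr {n M N} : RigidOccurs n N → RigidOccurs n (.appA M N)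
  | appIl {n M N} : RigidOccurs n M → RigidOccurs n (.appI M N)
  | appIr {n M N} : RigidOccurs n N → RigidOccurs n (.appI M N)

/-- Occurrence of a logic variable X in a term. -/
inductive HasLvar : ℕ → Tm → Prop
  | lvar {X es sh} : HasLvar X (.lvar X es sh)
  | pairl {X M N} : HasLvar X M → HasLvar X (.pair M N)
  | pairr {X M N} : HasLvar X N → HasLvar X (.pair M N)
  | fst {X M} : HasLvar X M → HasLvar X (.fst M)
  | snd {X M} : HasLvar X M → HasLvar X (.snd M)
  | lamL {X M} : HasLvar X M → HasLvar X (.lamL M)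
  | lamA {X M} : HasLvar X M → HasLvar X (.lamA M)
  | lamI {X M} : HasLvar X M → HasLvar X (.lamI M)
  | appLl {X M N} : HasLvar X M → HasLvar X (.appL M N)
  | appLr {X M N} : HasLvar X N → HasLvar X (.appL M N)
  | appAl {X M N} : HasLvar X M → HasLvar X (.appA M N)
  | appAr {X M N} : HasLvar X N → HasLvar X (.appA M N)
  | appIl {X M N} : HasLvar X M → HasLvar X (.appI M N)
  | appIr {X M N} : HasLvar X N → HasLvar X (.appI M N)

/-- Look up a (1-based) variable index in a substitution es.↑^sh,
    returning the new index and variable flag. -/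
def lookupE (es : SubE) (sh : ℕ) (n : ℕ) (f : Flag) : ℕ × Flag :=
  match es[n-1]? with
  | some e => (e.1, e.2.1)
  | none => (n - es.length + sh, f)

/-- Extend a substitution under a binder: 1^{ff}.(s ∘ ↑). -/
def extSub (es : SubE) (f : Flag) : SubE := (1, f, f) :: shiftE es

/-- Apply a substitution (of the variable-entry form) to a term. -/
def applySub (es : SubE) (sh : ℕ) : Tm → Tm
  | .var n f => .var (lookupE es sh n f).1 (lookupE es sh n f).2
  | .lvar X ts _ =>
      .lvar X (ts.map fun e => ((lookupE es sh e.1 e.2.1).1, (lookupE es sh e.1 e.2.1).2, e.2.2)) sh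
  | .pair M N => .pair (applySub es sh M) (applySub es sh N)
  | .fst M => .fst (applySub es sh M)
  | .snd M => .snd (applySub es sh M)
  | .lamL M => .lamL (applySub (extSub es .L) (sh+1) M)
  | .lamA M => .lamA (applySub (extSub es .A) (sh+1) M)
  | .lamI M => .lamI (applySub (extSub es .I) (sh+1) M)
  | .appL M N => .appL (applySub es sh M) (applySub es sh N)
  | .appA M N => .appA (applySub es sh M) (applySub es sh N)
  | .appI M N => .appI (applySub es sh M) (applySub es sh N)

/-- Instantiation [X ← N]M of a logic variable. -/
def inst (X : ℕ) (N : Tm) : Tm → Tm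
  | .var n f => .var n f
  | .lvar Y es sh => if Y = X then applySub es sh N else .lvar Y es sh
  | .pair M M' => .pair (inst X N M) (inst X N M')
  | .fst M => .fst (inst X N M)
  | .snd M => .snd (inst X N M)
  | .lamL M => .lamL (inst X N M)
  | .lamA M => .lamA (inst X N M)
  | .lamI M => .lamI (inst X N M)
  | .appL M M' => .appL (inst X N M) (inst X N M')
  | .appA M M' => .appA (inst X N M) (inst X N M')
  | .appI M M' => .appI (inst X N M) (inst X N M')


/-- The inverse of a pattern substitution es.↑^{sh} over a domain of n
    assumptions: entry j is i^{f_i f_i} when the i-th entry of es is j^{f_i}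
    (undefined entries are filled arbitrarily). -/
def invSub (es : SubE) (n : ℕ) : SubE :=
  (List.range n).map fun j =>
    match (es.zipIdx.map fun q => (q.2, q.1)).find? (fun p => p.2.1 = j + 1) with
    | some p => (p.1 + 1, p.2.2.1, p.2.2.1)
    | none => (0, Flag.I, Flag.I)

theorem set_eq_self_of_getElem? {α : Type} {l : List α} {k : ℕ} {v : α} (h : l[k]? = some v) :
    l.set k v = l := by
  obtain ⟨hk, rfl⟩ := List.getElem?_eq_some_iff.1 h
  exact List.set_getElem_self hk

theorem cToF_flagC (f : Flag) : cToF (flagC f) = f := by cases f <;> rfl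

def barF : CFlag → CFlag | .l => .ul | .a => .ua | c => c

theorem cToF_barF (c : CFlag) : cToF (barF c) = cToF c := by cases c <;> rfl

theorem barF_ne_l (c : CFlag) : barF c ≠ .l := by cases c <;> simp [barF]

theorem barF_eq_flagC {c : CFlag} {f : Flag} (h : barF c = flagC f) : c = .i ∧ f = .I := by
  cases c <;> cases f <;> simp_all [barF, flagC]

inductive SplitF : CFlag → CFlag → CFlag → Prop
  | int : SplitF .i .i .i
  | ulin : SplitF .ul .ul .ul
  | uaff : SplitF .ua .ua .ua
  | linl : SplitF .l .l .ul
  | linr : SplitF .l .ul .l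
  | affl : SplitF .a .a .ua
  | affr : SplitF .a .ua .a

theorem SplitF.cToF_eq {c c₁ c₂ : CFlag} (h : SplitF c c₁ c₂) :
    cToF c₁ = cToF c ∧ cToF c₂ = cToF c := by
  cases h <;> exact ⟨rfl, rfl⟩

theorem splitF_barF (c : CFlag) : SplitF c (barF c) c := by cases c <;> constructor

theorem bar_eq_map (Γ : Ctx) : bar Γ = Γ.map fun e => (e.1, barF e.2) := by
  unfold bar barF
  rfl

@[simp]
theorem bar_cons (A : Ty) (c : CFlag) (Γ : Ctx) : bar ((A, c) :: Γ) = (A, barF c) :: bar Γ := by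
  simp [bar_eq_map]

@[simp]
theorem length_bar (Γ : Ctx) : (bar Γ).length = Γ.length := by simp [bar_eq_map]

theorem getElem?_bar_eq_some {Γ : Ctx} {k : ℕ} {A : Ty} {c' : CFlag} :
    (bar Γ)[k]? = some (A, c') ↔ ∃ c, Γ[k]? = some (A, c) ∧ barF c = c' := by
  simp [bar_eq_map]

theorem bar_set (Γ : Ctx) (k : ℕ) (A : Ty) (c : CFlag) :
    bar (Γ.set k (A, c)) = (bar Γ).set k (A, barF c) := by
  simp [bar_eq_map, List.map_set]

theorem noLin_bar (Γ : Ctx) : NoLin (bar Γ) := by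
  intro e he
  rw [bar_eq_map] at he
  obtain ⟨x, -, rfl⟩ := List.mem_map.1 he
  exact barF_ne_l x.2

theorem NoLin.set {Γ : Ctx} (h : NoLin Γ) {c : CFlag} (hc : c ≠ .l) (k : ℕ) (A : Ty) :
    NoLin (Γ.set k (A, c)) := by
  intro e he
  rcases List.mem_or_eq_of_mem_set he with he | rfl
  exacts [h e he, hc]

section Split

variable {Γ Γ₁ Γ₂ : Ctx}

theorem Split.cons {c c₁ c₂ : CFlag} (hs : SplitF c c₁ c₂) (h : Split Γ Γ₁ Γ₂) (A : Ty) :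
    Split ((A, c) :: Γ) ((A, c₁) :: Γ₁) ((A, c₂) :: Γ₂) := by
  cases hs <;> constructor <;> exact h

theorem Split.length_eq (h : Split Γ Γ₁ Γ₂) : Γ₁.length = Γ.length ∧ Γ₂.length = Γ.length := by
  induction h <;> simp_all

theorem Split.getElem? (h : Split Γ Γ₁ Γ₂) {k : ℕ} {A : Ty} {c : CFlag}
    (hk : Γ[k]? = some (A, c)) :
    ∃ c₁ c₂, Γ₁[k]? = some (A, c₁) ∧ Γ₂[k]? = some (A, c₂) ∧ SplitF c c₁ c₂ := by
  induction h generalizing k with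
  | nil => simp at hk
  | int _ ih | ulin _ ih | uaff _ ih | linl _ ih | linr _ ih | affl _ ih | affr _ ih =>
    cases k with
    | zero =>
      simp only [List.getElem?_cons_zero, Option.some.injEq, Prod.mk.injEq] at hk
      obtain ⟨rfl, rfl⟩ := hk
      exact ⟨_, _, rfl, rfl, by constructor⟩
    | succ k => exact ih hk

theorem Split.getElem?_left (h : Split Γ Γ₁ Γ₂) {k : ℕ} {A : Ty} {c₁ : CFlag}
    (hk : Γ₁[k]? = some (A, c₁)) :
    ∃ c c₂, Γ[k]? = some (A, c) ∧ Γ₂[k]? = some (A, c₂) ∧ SplitF c c₁ c₂ := by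
  induction h generalizing k with
  | nil => simp at hk
  | int _ ih | ulin _ ih | uaff _ ih | linl _ ih | linr _ ih | affl _ ih | affr _ ih =>
    cases k with
    | zero =>
      simp only [List.getElem?_cons_zero, Option.some.injEq, Prod.mk.injEq] at hk
      obtain ⟨rfl, rfl⟩ := hk
      exact ⟨_, _, rfl, rfl, by constructor⟩
    | succ k => exact ih hk

theorem Split.symm (h : Split Γ Γ₁ Γ₂) : Split Γ Γ₂ Γ₁ := by
  induction h with
  | nil => exact .nil
  | int _ ih => exact .int ih
  | ulin _ ih => exact .ulin ih
  | uaff _ ih => exact .uaff ih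
  | linl _ ih => exact .linr ih
  | linr _ ih => exact .linl ih
  | affl _ ih => exact .affr ih
  | affr _ ih => exact .affl ih

theorem Split.getElem?_right (h : Split Γ Γ₁ Γ₂) {k : ℕ} {A : Ty} {c₂ : CFlag}
    (hk : Γ₂[k]? = some (A, c₂)) :
    ∃ c c₁, Γ[k]? = some (A, c) ∧ Γ₁[k]? = some (A, c₁) ∧ SplitF c c₁ c₂ := by
  obtain ⟨c, c₁, hc, hc₁, hsf⟩ := h.symm.getElem?_left hk
  refine ⟨c, c₁, hc, hc₁, ?_⟩
  cases hsf <;> constructor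

theorem Split.set (h : Split Γ Γ₁ Γ₂) {c c₁ c₂ : CFlag} (hs : SplitF c c₁ c₂) (k : ℕ) (A : Ty) :
    Split (Γ.set k (A, c)) (Γ₁.set k (A, c₁)) (Γ₂.set k (A, c₂)) := by
  induction h generalizing k with
  | nil => exact .nil
  | int h ih | ulin h ih | uaff h ih | linl h ih | linr h ih | affl h ih | affr h ih =>
    cases k with
    | zero => exact h.cons hs A
    | succ k => constructor; exact ih k

theorem split_bar (Γ : Ctx) : Split Γ (bar Γ) Γ := by
  induction Γ with
  | nil => exact .nil
  | cons e Γ ih =>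
    obtain ⟨A, c⟩ := e
    simpa using ih.cons (splitF_barF c) A

theorem affWeak_set_of_getElem? {k : ℕ} {A : Ty} (h : Γ[k]? = some (A, .ua)) :
    AffWeak (Γ.set k (A, .a)) Γ := by
  refine ⟨(bar Γ).set k (A, .a), ?_, (noLin_bar Γ).set (by simp) k A⟩
  simpa [set_eq_self_of_getElem? h] using (split_bar Γ).set SplitF.affl k A

end Split

section Variables

variable {Γ : Ctx} {n m k : ℕ} {f : Flag} {A : Ty}

theorem varTy_iff :
    VarTy Γ n f A ↔ 1 ≤ n ∧ Γ[n - 1]? = some (A, flagC f) ∧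
      ∀ k e, k ≠ n - 1 → Γ[k]? = some e → e.2 ≠ .l := by
  constructor
  · intro h
    induction h with
    | here hnl =>
      refine ⟨le_rfl, rfl, ?_⟩
      rintro (_ | k) e hk he
      · exact absurd rfl hk
      · exact hnl e (List.mem_of_getElem? he)
    | @there Γ B c n f A _ hc ih =>
      obtain ⟨hn, hget, hnl⟩ := ih
      refine ⟨by omega, by rwa [show n + 1 - 1 = n - 1 + 1 by omega, List.getElem?_cons_succ], ?_⟩
      rintro (_ | k) e hk he
      · simp only [List.getElem?_cons_zero, Option.some.injEq] at he
        exact he ▸ hc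
      · exact hnl k e (by omega) he
  · rintro ⟨hn, hget, hnl⟩
    induction Γ generalizing n with
    | nil => simp at hget
    | cons b Γ ih =>
      obtain _ | _ | n := n
      · omega
      · simp only [Nat.sub_self, List.getElem?_cons_zero, Option.some.injEq] at hget
        subst hget
        exact .here fun e he =>
          have ⟨j, hj⟩ := List.mem_iff_getElem?.1 he
          hnl (j + 1) e (by omega) hj
      · refine .there (ih (n := n + 1) (by omega) hget fun j e hj he => ?_) (hnl 0 b (by omega) rfl)
        exact hnl (j + 1) e (by omega) he

theorem varTyR_iff :
    VarTyR Γ n f A ↔ 1 ≤ n ∧ ∃ c, Γ[n - 1]? = some (A, c) ∧ cToF c = f := by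
  constructor
  · intro h
    induction h with
    | here hc => exact ⟨le_rfl, _, rfl, hc⟩
    | @there Γ B c n f A _ ih =>
      obtain ⟨hn, c, hget, hc⟩ := ih
      exact ⟨by omega, c, by rwa [show n + 1 - 1 = n - 1 + 1 by omega, List.getElem?_cons_succ], hc⟩
  · rintro ⟨hn, c, hget, hc⟩
    induction Γ generalizing n with
    | nil => simp at hget
    | cons b Γ ih =>
      obtain _ | _ | n := n
      · omega
      · simp only [Nat.sub_self, List.getElem?_cons_zero, Option.some.injEq] at hget
        exact hget ▸ .here hc
      · exact .there (ih (n := n + 1) (by omega) hget)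

theorem VarTy.set (hv : VarTy Γ m f A) (hk : k ≠ m - 1) {c : CFlag} (hc : c ≠ .l) (B : Ty) :
    VarTy (Γ.set k (B, c)) m f A := by
  obtain ⟨hm, hget, hnl⟩ := varTy_iff.1 hv
  refine varTy_iff.2 ⟨hm, by rwa [List.getElem?_set_ne hk], fun j e hj he => ?_⟩
  rw [List.getElem?_set] at he
  split_ifs at he with hkj
  · exact Option.some_inj.1 he ▸ hc
  · exact hnl j e hj he

theorem VarTyR.set (hv : VarTyR Γ m f A) {B : Ty} {c c' : CFlag} (hk : Γ[k]? = some (B, c))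
    (hc : cToF c' = cToF c) : VarTyR (Γ.set k (B, c')) m f A := by
  obtain ⟨hm, c₀, hget, hc₀⟩ := varTyR_iff.1 hv
  refine varTyR_iff.2 ⟨hm, ?_⟩
  by_cases hkm : k = m - 1
  · subst hkm
    obtain ⟨rfl, rfl⟩ : A = B ∧ c₀ = c := by simpa [hget] using hk
    exact ⟨c', List.getElem?_set_self (List.getElem?_eq_some_iff.1 hget).1, hc ▸ hc₀⟩
  · exact ⟨c₀, by rwa [List.getElem?_set_ne hkm], hc₀⟩

end Variables

section Substitutions

variable {Γ Γ' : Ctx} {es : SubE} {n : ℕ}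

theorem PatternSub.of_cons {e : ℕ × Flag × Flag} (h : PatternSub (e :: es)) : PatternSub es :=
  ⟨h.1.of_cons, fun e' he' => h.2 e' (List.mem_cons_of_mem _ he')⟩

theorem SubTy.shift_eq_length (h : SubTy Γ es n Γ') : n = Γ.length := by
  induction h with
  | consL hs _ _ ih | consA hs _ _ _ ih => rw [ih, hs.length_eq.2]
  | _ => simp_all

theorem SubTy.length_eq (h : SubTy Γ es n Γ') : Γ'.length = es.length := by
  induction h <;> simp_all

theorem subTy_nil_iff : SubTy Γ [] n Γ' ↔ n = Γ.length ∧ Γ' = [] ∧ NoLin Γ := by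
  constructor
  · intro h
    generalize hes : ([] : SubE) = es at h
    induction h with
    | nil => exact ⟨rfl, rfl, by simp [NoLin]⟩
    | shift _ hc ih =>
      obtain ⟨rfl, rfl, hnl⟩ := ih hes
      exact ⟨rfl, rfl, by simpa [NoLin, hc] using hnl⟩
    | _ => cases hes
  · rintro ⟨rfl, rfl, hnl⟩
    induction Γ with
    | nil => exact .nil
    | cons b Γ ih =>
      exact .shift (ih fun e he => hnl e (List.mem_cons_of_mem _ he)) (hnl b List.mem_cons_self)

theorem SubTy.exists_getElem?_of_mem (h : SubTy Γ es n Γ') :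
    ∀ e ∈ es, 1 ≤ e.1 ∧ ∃ A c, Γ[e.1 - 1]? = some (A, c) ∧ cToF c = e.2.1 := by
  induction h with
  | nil | shift => simp
  | consI hv _ ih =>
    refine List.forall_mem_cons.2 ⟨?_, ih⟩
    obtain ⟨hm, hget, -⟩ := varTy_iff.1 hv
    obtain ⟨c, hc, hbar⟩ := getElem?_bar_eq_some.1 hget
    exact ⟨hm, _, c, hc, by rw [← cToF_barF, hbar, cToF_flagC]⟩
  | consL hs hv _ ih | consA hs _ hv _ ih =>
    refine List.forall_mem_cons.2 ⟨?_, fun e he => ?_⟩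
    · obtain ⟨hm, hget, -⟩ := varTy_iff.1 hv
      obtain ⟨c, _, hc, -, hsf⟩ := hs.getElem?_left hget
      exact ⟨hm, _, c, hc, by rw [← hsf.cToF_eq.1, cToF_flagC]⟩
    · obtain ⟨he1, A, c₂, hget, hc₂⟩ := ih e he
      obtain ⟨c, _, hc, -, hsf⟩ := hs.getElem?_right hget
      exact ⟨he1, A, c, hc, by rw [← hsf.cToF_eq.2, hc₂]⟩
  | consUL hv _ ih | consUA hv _ _ ih =>
    refine List.forall_mem_cons.2 ⟨?_, ih⟩
    obtain ⟨hm, c, hc, hcf⟩ := varTyR_iff.1 hv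
    exact ⟨hm, _, c, hc, hcf⟩

end Substitutions

/-- Out-of-range entries read as the default `(base 0, i)`, which splits as `i ⋈ i`, so
`Split.pullback` needs no side condition. -/
def pullback (u : SubE) (Δ : Ctx) : Ctx :=
  u.map fun e => Δ.getD (e.1 - 1) (.base 0, .i)

section Pullback

variable {u : SubE} {Δ Δ₁ Δ₂ : Ctx}

@[simp]
theorem length_pullback : (pullback u Δ).length = u.length := List.length_map _

theorem getElem?_pullback (q : ℕ) :
    (pullback u Δ)[q]? = u[q]?.map fun e => Δ.getD (e.1 - 1) (.base 0, .i) :=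
  List.getElem?_map

theorem pullback_bar : pullback u (bar Δ) = bar (pullback u Δ) := by
  simp only [pullback, bar_eq_map, List.map_map]
  exact List.map_congr_left fun e _ => List.getD_map Δ (.base 0, .i) _

theorem pullback_extSub (hu : ∀ e ∈ u, 1 ≤ e.1) (f : Flag) (b : Ty × CFlag) :
    pullback (extSub u f) (b :: Δ) = b :: pullback u Δ := by
  simp only [pullback, extSub, shiftE, List.map_cons, List.map_map]
  refine congrArg _ (List.map_congr_left fun e he => ?_)
  obtain ⟨k, hk⟩ := Nat.exists_eq_add_of_le' (hu e he)
  simp [hk]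

theorem Split.pullback (h : Split Δ Δ₁ Δ₂) (u : SubE) :
    Split (LinUnif.pullback u Δ) (LinUnif.pullback u Δ₁) (LinUnif.pullback u Δ₂) := by
  induction u with
  | nil => exact .nil
  | cons e u ih =>
    show Split (Δ.getD _ _ :: _) (Δ₁.getD _ _ :: _) (Δ₂.getD _ _ :: _)
    simp only [List.getD_eq_getElem?_getD (l := Δ), List.getD_eq_getElem?_getD (l := Δ₁),
      List.getD_eq_getElem?_getD (l := Δ₂)]
    rcases hk : Δ[e.1 - 1]? with _ | ⟨A, c⟩
    · have hk₁ : Δ₁[e.1 - 1]? = none := by simp_all [h.length_eq]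
      have hk₂ : Δ₂[e.1 - 1]? = none := by simp_all [h.length_eq]
      rw [hk₁, hk₂]
      exact ih.cons .int _
    · obtain ⟨c₁, c₂, hk₁, hk₂, hsf⟩ := h.getElem? hk
      rw [hk₁, hk₂]
      exact ih.cons hsf A

theorem NoLin.pullback (h : NoLin Δ) (u : SubE) : NoLin (LinUnif.pullback u Δ) := by
  intro e he
  obtain ⟨e', -, rfl⟩ := List.mem_map.1 he
  rw [List.getD_eq_getElem?_getD]
  rcases hk : Δ[e'.1 - 1]? with _ | b
  · simp
  · exact h b (List.mem_of_getElem? hk)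

end Pullback

section StrongTyping

variable {Γ Γ' : Ctx} {es : SubE} {n : ℕ}

theorem PatternSub.pred_ne_of_mem {e e' : ℕ × Flag × Flag} (h : PatternSub (e :: es))
    (he' : e' ∈ es) : e.1 - 1 ≠ e'.1 - 1 := by
  have hne := List.rel_of_pairwise_cons h.1 he'
  have h₁ := (h.2 e List.mem_cons_self).2
  have h₂ := (h.2 e' (List.mem_cons_of_mem _ he')).2
  omega

theorem SubTy.exists_mem_of_getElem?_eq_l (h : SubTy Γ es n Γ') {k : ℕ} {A : Ty}
    (hk : Γ[k]? = some (A, .l)) : ∃ e ∈ es, e.1 = k + 1 := by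
  induction h generalizing k with
  | nil => simp at hk
  | shift _ hc ih =>
    cases k with
    | zero =>
      simp only [List.getElem?_cons_zero, Option.some.injEq, Prod.mk.injEq] at hk
      exact absurd hk.2 hc
    | succ k => simpa using ih hk
  | consI _ _ ih | consUL _ _ ih | consUA _ _ _ ih =>
    obtain ⟨e, he, hek⟩ := ih hk
    exact ⟨e, List.mem_cons_of_mem _ he, hek⟩
  | @consL _ _ _ m _ _ _ _ _ hs hv _ ih =>
    obtain ⟨c₁, c₂, h₁, h₂, hsf⟩ := hs.getElem? hk
    cases hsf with
    | linl =>
      obtain ⟨hm, -, hnl⟩ := varTy_iff.1 hv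
      by_cases hkm : k = m - 1
      · exact ⟨_, List.mem_cons_self, by simp only; omega⟩
      · exact absurd rfl (hnl k _ hkm h₁)
    | linr =>
      obtain ⟨e, he, hek⟩ := ih h₂
      exact ⟨e, List.mem_cons_of_mem _ he, hek⟩
  | consA hs hnl _ _ ih =>
    obtain ⟨c₁, c₂, h₁, h₂, hsf⟩ := hs.getElem? hk
    cases hsf with
    | linl => exact absurd rfl (hnl _ (List.mem_of_getElem? h₁))
    | linr =>
      obtain ⟨e, he, hek⟩ := ih h₂
      exact ⟨e, List.mem_cons_of_mem _ he, hek⟩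

theorem SubTy.set_ua (h : SubTy Γ es n Γ') {k : ℕ} {B : Ty} (hk : Γ[k]? = some (B, .a))
    (hes : ∀ e ∈ es, e.1 ≠ k + 1) : SubTy (Γ.set k (B, .ua)) es n Γ' := by
  induction h generalizing k with
  | nil => simp at hk
  | shift h hc ih =>
    cases k with
    | zero =>
      obtain ⟨rfl, rfl⟩ : _ = B ∧ _ = CFlag.a := by simpa using hk
      exact .shift h (by simp)
    | succ k => exact .shift (ih hk (by simp)) hc
  | @consI Δ _ _ _ _ _ _ hv _ ih =>
    have hbar : bar (Δ.set k (B, .ua)) = bar Δ := by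
      rw [bar_set, set_eq_self_of_getElem?
        (getElem?_bar_eq_some.2 ⟨_, hk, rfl⟩ : (bar Δ)[k]? = some (B, barF .ua))]
    exact .consI (hbar ▸ hv) (ih hk fun e he => hes e (List.mem_cons_of_mem _ he))
  | consL hs hv h ih =>
    obtain ⟨c₁, c₂, h₁, h₂, hsf⟩ := hs.getElem? hk
    have hm := (varTy_iff.1 hv).1
    have hv' := hv.set (k := k) (by have := hes _ List.mem_cons_self; omega) (c := .ua) (by simp) B
    refine .consL (hs.set .uaff k B) hv' ?_
    cases hsf with
    | affl => rwa [set_eq_self_of_getElem? h₂]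
    | affr => exact ih h₂ fun e he => hes e (List.mem_cons_of_mem _ he)
  | consA hs hnl hv h ih =>
    obtain ⟨c₁, c₂, h₁, h₂, hsf⟩ := hs.getElem? hk
    have hm := (varTy_iff.1 hv).1
    have hv' := hv.set (k := k) (by have := hes _ List.mem_cons_self; omega) (c := .ua) (by simp) B
    refine .consA (hs.set .uaff k B) (hnl.set (by simp) k B) hv' ?_
    cases hsf with
    | affl => rwa [set_eq_self_of_getElem? h₂]
    | affr => exact ih h₂ fun e he => hes e (List.mem_cons_of_mem _ he)
  | consUL hv _ ih =>
    exact .consUL (hv.set hk rfl) (ih hk fun e he => hes e (List.mem_cons_of_mem _ he))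
  | consUA hv hf _ ih =>
    exact .consUA (hv.set hk rfl) hf (ih hk fun e he => hes e (List.mem_cons_of_mem _ he))

theorem SubTy.consA_set {m : ℕ} {A : Ty} {c : CFlag} (h : SubTy Γ es n Γ') (hm : 1 ≤ m)
    (hΓ : Γ[m - 1]? = some (A, c)) (hc : c = .a ∨ c = .ua) (hes : ∀ e ∈ es, e.1 ≠ m) :
    SubTy (Γ.set (m - 1) (A, .a)) ((m, .A, .A) :: es) n ((A, .a) :: Γ') := by
  have hlt : m - 1 < (bar Γ).length := by simpa using (List.getElem?_eq_some_iff.1 hΓ).1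
  have hv : VarTy ((bar Γ).set (m - 1) (A, .a)) m .A A := by
    refine varTy_iff.2 ⟨hm, List.getElem?_set_self hlt, fun j e hj he => ?_⟩
    rw [List.getElem?_set_ne (Ne.symm hj)] at he
    exact noLin_bar Γ e (List.mem_of_getElem? he)
  have htail : SubTy (Γ.set (m - 1) (A, .ua)) es n Γ' := by
    rcases hc with rfl | rfl
    · exact h.set_ua hΓ fun e he hem => hes e he (by omega)
    · rwa [set_eq_self_of_getElem? hΓ]
  exact .consA ((split_bar Γ).set .affl _ A) ((noLin_bar Γ).set (by simp) _ A) hv htail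

theorem SubTy.strengthen_ua (h : SubTy Γ es n Γ') (hpat : PatternSub es) {i m : ℕ} {g : Flag}
    (he : es[i]? = some (m, .A, g)) {B : Ty} {c : CFlag} (hΓ : Γ[m - 1]? = some (B, c))
    (hc : c = .a ∨ c = .ua) (hΓ' : Γ'[i]? = some (B, .ua)) :
    SubTy (Γ.set (m - 1) (B, .a)) es n (Γ'.set i (B, .a)) := by
  induction h generalizing i c with
  | nil | shift => simp at he
  | consI hv _ ih =>
    cases i with
    | zero => simp at hΓ'
    | succ j =>
      simp only [List.getElem?_cons_succ] at he hΓ'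
      have hne := hpat.pred_ne_of_mem (List.mem_of_getElem? he)
      rw [List.set_cons_succ]
      refine .consI ?_ (ih hpat.of_cons he hΓ hc hΓ')
      rw [bar_set]
      exact hv.set hne.symm (barF_ne_l _) B
  | consL hs hv _ ih =>
    cases i with
    | zero => simp at hΓ'
    | succ j =>
      simp only [List.getElem?_cons_succ] at he hΓ'
      have hne := hpat.pred_ne_of_mem (List.mem_of_getElem? he)
      obtain ⟨c₁, c₂, -, h₂, hsf⟩ := hs.getElem? hΓ
      have hc₂ : c₂ = .a ∨ c₂ = .ua := by rcases hc with rfl | rfl <;> cases hsf <;> simp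
      rw [List.set_cons_succ]
      exact .consL (hs.set .affr _ B) (hv.set hne.symm (by simp) B)
        (ih hpat.of_cons he h₂ hc₂ hΓ')
  | consA hs hnl hv _ ih =>
    cases i with
    | zero => simp at hΓ'
    | succ j =>
      simp only [List.getElem?_cons_succ] at he hΓ'
      have hne := hpat.pred_ne_of_mem (List.mem_of_getElem? he)
      obtain ⟨c₁, c₂, -, h₂, hsf⟩ := hs.getElem? hΓ
      have hc₂ : c₂ = .a ∨ c₂ = .ua := by rcases hc with rfl | rfl <;> cases hsf <;> simp
      rw [List.set_cons_succ]
      exact .consA (hs.set .affr _ B) (hnl.set (by simp) _ B) (hv.set hne.symm (by simp) B)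
        (ih hpat.of_cons he h₂ hc₂ hΓ')
  | consUL hv _ ih =>
    cases i with
    | zero => simp at hΓ'
    | succ j =>
      simp only [List.getElem?_cons_succ] at he hΓ'
      rw [List.set_cons_succ]
      exact .consUL (hv.set hΓ (by rcases hc with rfl | rfl <;> rfl))
        (ih hpat.of_cons he hΓ hc hΓ')
  | consUA hv hf h ih =>
    cases i with
    | zero =>
      simp only [List.getElem?_cons_zero, Option.some.injEq, Prod.mk.injEq] at he hΓ'
      obtain ⟨rfl, rfl, rfl⟩ := he
      obtain ⟨rfl, -⟩ := hΓ'
      rw [List.set_cons_zero]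
      refine h.consA_set (varTyR_iff.1 hv).1 hΓ hc fun e he' hem => ?_
      exact hpat.pred_ne_of_mem he' (by rw [hem])
    | succ j =>
      simp only [List.getElem?_cons_succ] at he hΓ'
      rw [List.set_cons_succ]
      exact .consUA (hv.set hΓ (by rcases hc with rfl | rfl <;> rfl)) hf
        (ih hpat.of_cons he hΓ hc hΓ')

theorem SplitF.corr_of_right {c c₁ c₂ c' : CFlag} (hsf : SplitF c c₁ c₂) (hc₁ : c₁ ≠ .l)
    (h : c' = c₂ ∨ c₂ = .a ∧ c' = .ua) : c' = c ∨ c = .a ∧ c' = .ua := by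
  cases hsf <;> simp_all

theorem SubTy.corr_head (h : SubTy Γ es n Γ') (hpat : PatternSub es) {m : ℕ} {f g : Flag}
    (he : es[0]? = some (m, f, g)) :
    ∃ A c c', Γ[m - 1]? = some (A, c) ∧ Γ'[0]? = some (A, c') ∧ cToF c = f ∧
      (c' = c ∨ c = .a ∧ c' = .ua) := by
  obtain _ | ⟨e, es⟩ := es
  · simp at he
  obtain rfl : e = (m, f, g) := by simpa using he
  obtain rfl : f = g := (hpat.2 _ List.mem_cons_self).1
  cases h with
  | consI hv =>
    obtain ⟨-, hget, -⟩ := varTy_iff.1 hv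
    obtain ⟨c, hc, hbar⟩ := getElem?_bar_eq_some.1 hget
    obtain ⟨rfl, -⟩ := barF_eq_flagC hbar
    exact ⟨_, .i, .i, hc, rfl, rfl, .inl rfl⟩
  | consL hs hv =>
    obtain ⟨c, _, hc, -, hsf⟩ := hs.getElem?_left (varTy_iff.1 hv).2.1
    cases hsf
    exact ⟨_, .l, .l, hc, rfl, rfl, .inl rfl⟩
  | consA hs _ hv =>
    obtain ⟨c, _, hc, -, hsf⟩ := hs.getElem?_left (varTy_iff.1 hv).2.1
    cases hsf
    exact ⟨_, .a, .a, hc, rfl, rfl, .inl rfl⟩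
  | consUL hv h =>
    obtain ⟨-, c, hc, hcf⟩ := varTyR_iff.1 hv
    cases c <;> cases hcf
    · -- a linear assumption would also have to be consumed by a later entry
      obtain ⟨e, he, hek⟩ := h.exists_mem_of_getElem?_eq_l hc
      exact absurd (by omega) (hpat.pred_ne_of_mem he)
    · exact ⟨_, .ul, .ul, hc, rfl, rfl, .inl rfl⟩
  | consUA hv =>
    obtain ⟨-, c, hc, hcf⟩ := varTyR_iff.1 hv
    cases c <;> cases hcf
    · exact ⟨_, .a, .ua, hc, rfl, rfl, .inr ⟨rfl, rfl⟩⟩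
    · exact ⟨_, .ua, .ua, hc, rfl, rfl, .inl rfl⟩

theorem SubTy.getElem?_corr (h : SubTy Γ es n Γ') (hpat : PatternSub es) {i m : ℕ}
    {f g : Flag} (he : es[i]? = some (m, f, g)) :
    ∃ A c c', Γ[m - 1]? = some (A, c) ∧ Γ'[i]? = some (A, c') ∧ cToF c = f ∧
      (c' = c ∨ c = .a ∧ c' = .ua) := by
  induction h generalizing i with
  | nil | shift => simp at he
  | consI hv h ih =>
    cases i with
    | zero => exact (SubTy.consI hv h).corr_head hpat he
    | succ j => simpa using ih hpat.of_cons (by simpa using he)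
  | consUL hv h ih =>
    cases i with
    | zero => exact (SubTy.consUL hv h).corr_head hpat he
    | succ j => simpa using ih hpat.of_cons (by simpa using he)
  | consUA hv hf h ih =>
    cases i with
    | zero => exact (SubTy.consUA hv hf h).corr_head hpat he
    | succ j => simpa using ih hpat.of_cons (by simpa using he)
  | consL hs hv h ih =>
    cases i with
    | zero => exact (SubTy.consL hs hv h).corr_head hpat he
    | succ j =>
      simp only [List.getElem?_cons_succ] at he
      obtain ⟨A, c₂, c', h₂, hΓ', hf, hc'⟩ := ih hpat.of_cons he
      obtain ⟨c, c₁, hc, h₁, hsf⟩ := hs.getElem?_right h₂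
      have hne := hpat.pred_ne_of_mem (List.mem_of_getElem? he)
      have hc₁ : c₁ ≠ .l := (varTy_iff.1 hv).2.2 _ _ (Ne.symm hne) h₁
      exact ⟨A, c, c', hc, hΓ', hsf.cToF_eq.2 ▸ hf, hsf.corr_of_right hc₁ hc'⟩
  | consA hs hnl hv h ih =>
    cases i with
    | zero => exact (SubTy.consA hs hnl hv h).corr_head hpat he
    | succ j =>
      simp only [List.getElem?_cons_succ] at he
      obtain ⟨A, c₂, c', h₂, hΓ', hf, hc'⟩ := ih hpat.of_cons he
      obtain ⟨c, c₁, hc, h₁, hsf⟩ := hs.getElem?_right h₂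
      have hc₁ : c₁ ≠ .l := hnl _ (List.mem_of_getElem? h₁)
      exact ⟨A, c, c', hc, hΓ', hsf.cToF_eq.2 ▸ hf, hsf.corr_of_right hc₁ hc'⟩

theorem SubTy.eq_pullback (h : SubTy Γ es n Γ') (hpat : PatternSub es)
    (hstrong : ∀ Γ'', AffWeak Γ'' Γ' → SubTy Γ es n Γ'' → Γ'' = Γ') :
    Γ' = pullback es Γ := by
  refine List.ext_getElem? fun i => ?_
  rw [getElem?_pullback]
  rcases hi : es[i]? with _ | ⟨m, f, g⟩
  · rw [Option.map_none, List.getElem?_eq_none_iff, h.length_eq]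
    exact List.getElem?_eq_none_iff.1 hi
  obtain ⟨A, c, c', hΓ, hΓ', hf, hc'⟩ := h.getElem?_corr hpat hi
  rw [Option.map_some, List.getD_eq_getElem?_getD, hΓ, hΓ']
  rcases hc' with rfl | ⟨rfl, rfl⟩
  · rfl
  · subst hf
    have hset := hstrong _ (affWeak_set_of_getElem? hΓ') <| by
      simpa [set_eq_self_of_getElem? hΓ] using h.strengthen_ua hpat hi hΓ (.inl rfl) hΓ'
    have := congrArg (·[i]?) hset
    simp [List.getElem?_set_self (List.getElem?_eq_some_iff.1 hΓ').1, hΓ'] at this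

end StrongTyping

/-- `t` and `u` play the roles of `s⁻¹` and `s`; this is the invariant carried under binders
(by `extSub`) and through context splits. -/
structure IsPatternInverse (t u : SubE) (Δ : Ctx) : Prop where
  one_le : ∀ e ∈ u, 1 ≤ e.1
  exists_getElem? : ∀ e ∈ u, ∃ A c, Δ[e.1 - 1]? = some (A, c) ∧ cToF c = e.2.1
  getElem?_inv : ∀ {q e}, u[q]? = some e → t[e.1 - 1]? = some (q + 1, e.2.1, e.2.1)

@[simp]
theorem length_extSub (u : SubE) (f : Flag) : (extSub u f).length = u.length + 1 := by
  simp [extSub, shiftE]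

theorem getElem?_extSub_zero (t : SubE) (f : Flag) : (extSub t f)[0]? = some (1, f, f) := rfl

theorem getElem?_extSub_succ (t : SubE) (f : Flag) (k : ℕ) :
    (extSub t f)[k + 1]? = t[k]?.map fun e => (e.1 + 1, e.2) := by
  simp [extSub, shiftE]

namespace IsPatternInverse

variable {t u : SubE} {Δ : Ctx}

theorem mono (h : IsPatternInverse t u Δ) {Δ' : Ctx}
    (hΔ : ∀ (k : ℕ) (A : Ty) (c : CFlag), Δ[k]? = some (A, c) →
      ∃ c', Δ'[k]? = some (A, c') ∧ cToF c' = cToF c) :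
    IsPatternInverse t u Δ' where
  one_le := h.one_le
  exists_getElem? e he := by
    obtain ⟨A, c, hc, hcf⟩ := h.exists_getElem? e he
    obtain ⟨c', hc', hcf'⟩ := hΔ _ A c hc
    exact ⟨A, c', hc', hcf' ▸ hcf⟩
  getElem?_inv := h.getElem?_inv

theorem split_left (h : IsPatternInverse t u Δ) {Δ₁ Δ₂ : Ctx} (hs : Split Δ Δ₁ Δ₂) :
    IsPatternInverse t u Δ₁ :=
  h.mono fun _ _ _ hk =>
    have ⟨c₁, _, h₁, _, hsf⟩ := hs.getElem? hk
    ⟨c₁, h₁, hsf.cToF_eq.1⟩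

theorem split_right (h : IsPatternInverse t u Δ) {Δ₁ Δ₂ : Ctx} (hs : Split Δ Δ₁ Δ₂) :
    IsPatternInverse t u Δ₂ :=
  h.mono fun _ _ _ hk =>
    have ⟨_, c₂, _, h₂, hsf⟩ := hs.getElem? hk
    ⟨c₂, h₂, hsf.cToF_eq.2⟩

theorem bar (h : IsPatternInverse t u Δ) : IsPatternInverse t u (bar Δ) :=
  h.mono fun _ _ c hk => ⟨barF c, getElem?_bar_eq_some.2 ⟨c, hk, rfl⟩, cToF_barF c⟩

theorem extSub (h : IsPatternInverse t u Δ) (f : Flag) (B : Ty) :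
    IsPatternInverse (LinUnif.extSub t f) (LinUnif.extSub u f) ((B, flagC f) :: Δ) where
  one_le := by
    simp only [LinUnif.extSub, shiftE, List.mem_cons, List.mem_map]
    rintro _ (rfl | ⟨e, -, rfl⟩) <;> simp
  exists_getElem? := by
    simp only [LinUnif.extSub, shiftE, List.forall_mem_cons, List.forall_mem_map]
    refine ⟨⟨B, _, rfl, cToF_flagC f⟩, fun e he => ?_⟩
    obtain ⟨A, c, hc, hcf⟩ := h.exists_getElem? e he
    have := h.one_le e he
    exact ⟨A, c, by rwa [show e.1 + 1 - 1 = e.1 - 1 + 1 by omega, List.getElem?_cons_succ], hcf⟩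
  getElem?_inv := by
    rintro (_ | q) e hq
    · rw [getElem?_extSub_zero] at hq
      cases hq
      rfl
    · rw [getElem?_extSub_succ] at hq
      obtain ⟨e', he', rfl⟩ := Option.map_eq_some_iff.1 hq
      have := h.one_le e' (List.mem_of_getElem? he')
      rw [show e'.1 + 1 - 1 = e'.1 - 1 + 1 by omega, getElem?_extSub_succ, h.getElem?_inv he']
      rfl

theorem index_inj (h : IsPatternInverse t u Δ) {q q' : ℕ} {e e' : ℕ × Flag × Flag}
    (hq : u[q]? = some e) (hq' : u[q']? = some e') (hee : e.1 = e'.1) : q = q' := by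
  have := h.getElem?_inv hq
  rw [hee, h.getElem?_inv hq'] at this
  simp only [Option.some.injEq, Prod.mk.injEq] at this
  omega

theorem exists_of_mem (h : IsPatternInverse t u Δ) {m : ℕ} (hm : ∃ e ∈ u, e.1 = m) {A : Ty}
    {c : CFlag} (hΔ : Δ[m - 1]? = some (A, c)) :
    ∃ q g, t[m - 1]? = some (q + 1, cToF c, cToF c) ∧ u[q]? = some (m, cToF c, g) := by
  obtain ⟨e, he, rfl⟩ := hm
  obtain ⟨q, hq⟩ := List.mem_iff_getElem?.1 he
  obtain ⟨A', c', hΔ', hcf⟩ := h.exists_getElem? e he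
  obtain ⟨rfl, rfl⟩ : A = A' ∧ c = c' := by simpa [hΔ] using hΔ'
  rw [hcf]
  exact ⟨q, e.2.2, h.getElem?_inv hq, hq⟩

end IsPatternInverse

section Transport

variable {t u : SubE} {Δ : Ctx} {m : ℕ} {f : Flag} {A : Ty}

theorem lookupE_of_getElem? {s : SubE} {n : ℕ} {e : ℕ × Flag × Flag} (h : s[n - 1]? = some e)
    (sh : ℕ) (f : Flag) : lookupE s sh n f = (e.1, e.2.1) := by
  rw [lookupE, h]

theorem VarTy.pullback (hv : VarTy Δ m f A) (h : IsPatternInverse t u Δ)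
    (hm : ∃ e ∈ u, e.1 = m) :
    ∃ q g, t[m - 1]? = some (q + 1, f, f) ∧ u[q]? = some (m, f, g) ∧
      VarTy (LinUnif.pullback u Δ) (q + 1) f A := by
  obtain ⟨-, hget, hnl⟩ := varTy_iff.1 hv
  obtain ⟨q, g, ht, hu⟩ := h.exists_of_mem hm hget
  rw [cToF_flagC] at ht hu
  refine ⟨q, g, ht, hu, varTy_iff.2 ⟨le_add_self, ?_, fun j e hj he => ?_⟩⟩
  · simp [getElem?_pullback, hu, List.getD_eq_getElem?_getD, hget]
  · rw [getElem?_pullback] at he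
    obtain ⟨e', hj', rfl⟩ := Option.map_eq_some_iff.1 he
    have he' := List.mem_of_getElem? hj'
    obtain ⟨A', c', hΔ', -⟩ := h.exists_getElem? e' he'
    have hne : e'.1 ≠ m := fun hm' => hj (by simpa using h.index_inj hj' hu hm')
    have he'1 := h.one_le e' he'
    have hm1 : 1 ≤ m := h.one_le _ (List.mem_of_getElem? hu)
    rw [List.getD_eq_getElem?_getD, hΔ']
    exact hnl _ _ (by omega) hΔ'

theorem VarTyR.pullback (hv : VarTyR Δ m f A) (h : IsPatternInverse t u Δ)
    (hm : ∃ e ∈ u, e.1 = m) :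
    ∃ q g, t[m - 1]? = some (q + 1, f, f) ∧ u[q]? = some (m, f, g) ∧
      VarTyR (LinUnif.pullback u Δ) (q + 1) f A := by
  obtain ⟨-, c, hget, rfl⟩ := varTyR_iff.1 hv
  obtain ⟨q, g, ht, hu⟩ := h.exists_of_mem hm hget
  refine ⟨q, g, ht, hu, varTyR_iff.2 ⟨le_add_self, c, ?_, rfl⟩⟩
  simp [getElem?_pullback, hu, List.getD_eq_getElem?_getD, hget]

theorem SubTy.pullback {ts : SubE} {n : ℕ} {Γ₀ : Ctx} (hts : SubTy Δ ts n Γ₀)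
    (h : IsPatternInverse t u Δ) (hcov : ∀ e ∈ ts, ∃ e' ∈ u, e'.1 = e.1) :
    SubTy (LinUnif.pullback u Δ) (ts.map fun e =>
      ((lookupE t u.length e.1 e.2.1).1, (lookupE t u.length e.1 e.2.1).2, e.2.2)) u.length Γ₀ := by
  induction hts generalizing u with
  | nil => exact subTy_nil_iff.2 ⟨by simp, rfl, NoLin.pullback (fun _ he => by simp at he) u⟩
  | shift hts hc =>
    obtain ⟨-, rfl, hnl⟩ := subTy_nil_iff.1 (SubTy.shift hts hc)
    exact subTy_nil_iff.2 ⟨by simp, rfl, hnl.pullback u⟩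
  | consI hv _ ih =>
    obtain ⟨hhd, htl⟩ := List.forall_mem_cons.1 hcov
    obtain ⟨q, g, ht, -, hv'⟩ := hv.pullback h.bar hhd
    rw [pullback_bar] at hv'
    rw [List.map_cons, lookupE_of_getElem? ht]
    exact .consI hv' (ih h htl)
  | consL hs hv _ ih =>
    obtain ⟨hhd, htl⟩ := List.forall_mem_cons.1 hcov
    obtain ⟨q, g, ht, -, hv'⟩ := hv.pullback (h.split_left hs) hhd
    rw [List.map_cons, lookupE_of_getElem? ht]
    exact .consL (hs.pullback u) hv' (ih (h.split_right hs) htl)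
  | consA hs hnl hv _ ih =>
    obtain ⟨hhd, htl⟩ := List.forall_mem_cons.1 hcov
    obtain ⟨q, g, ht, -, hv'⟩ := hv.pullback (h.split_left hs) hhd
    rw [List.map_cons, lookupE_of_getElem? ht]
    exact .consA (hs.pullback u) (hnl.pullback u) hv' (ih (h.split_right hs) htl)
  | consUL hv _ ih =>
    obtain ⟨hhd, htl⟩ := List.forall_mem_cons.1 hcov
    obtain ⟨q, g, ht, -, hv'⟩ := hv.pullback h hhd
    rw [List.map_cons, lookupE_of_getElem? ht]
    exact .consUL hv' (ih h htl)
  | consUA hv hf _ ih =>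
    obtain ⟨hhd, htl⟩ := List.forall_mem_cons.1 hcov
    obtain ⟨q, g, ht, -, hv'⟩ := hv.pullback h hhd
    rw [List.map_cons, lookupE_of_getElem? ht]
    exact .consUA hv' hf (ih h htl)

theorem IsPatternInverse.applySub_applySub_lvar (h : IsPatternInverse t u Δ) {ts : SubE}
    {n : ℕ} {Γ₀ : Ctx} (hts : SubTy Δ ts n Γ₀) (hcov : ∀ e ∈ ts, ∃ e' ∈ u, e'.1 = e.1)
    (X st su sh : ℕ) : applySub u su (applySub t st (.lvar X ts sh)) = .lvar X ts su := by
  simp only [applySub, List.map_map, Tm.lvar.injEq, true_and, and_true]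
  conv_rhs => rw [← List.map_id ts]
  refine List.map_congr_left fun e he => ?_
  obtain ⟨-, A, c, hΔ, hcf⟩ := hts.exists_getElem?_of_mem e he
  obtain ⟨q, g, ht, hu⟩ := h.exists_of_mem (hcov e he) hΔ
  have hu' : u[q + 1 - 1]? = some _ := hu
  simp [lookupE_of_getElem? ht, lookupE_of_getElem? hu', hcf]

end Transport

def Covers (u : SubE) (M : Tm) : Prop := ∀ m, Occurs m M → 1 ≤ m → ∃ e ∈ u, e.1 = m

theorem Covers.extSub {u : SubE} {M N : Tm} (h : Covers u N)
    (hocc : ∀ m, Occurs (m + 1) M → Occurs m N) (f : Flag) : Covers (extSub u f) M := by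
  rintro (_ | _ | m) hm hm1
  · omega
  · exact ⟨_, List.mem_cons_self, rfl⟩
  · obtain ⟨e, he, hem⟩ := h (m + 1) (hocc _ hm) (by omega)
    exact ⟨(e.1 + 1, e.2), List.mem_cons_of_mem _ (List.mem_map_of_mem he), by simp [hem]⟩

theorem HasTy.pullback {ΓX : ℕ → Ctx} {AX : ℕ → Ty} {Δ : Ctx} {M : Tm} {A : Ty}
    (hM : HasTy ΓX AX Δ M A) {t u : SubE} (h : IsPatternInverse t u Δ)
    (hcov : Covers u M) :
    HasTy ΓX AX (LinUnif.pullback u Δ) (applySub t u.length M) A ∧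
      applySub u Δ.length (applySub t u.length M) = M := by
  induction hM generalizing t u with
  | var hv =>
    obtain ⟨q, g, ht, hu, hv'⟩ := hv.pullback h (hcov _ .var (varTy_iff.1 hv).1)
    have hu' : u[q + 1 - 1]? = some _ := hu
    constructor
    · simpa only [applySub, lookupE_of_getElem? ht] using HasTy.var hv'
    · simp only [applySub, lookupE_of_getElem? ht, lookupE_of_getElem? hu']
  | @lvar Δ es sh X hts =>
    have hcov' : ∀ e ∈ es, ∃ e' ∈ u, e'.1 = e.1 := fun e he =>
      hcov _ (.lvar he rfl) (hts.exists_getElem?_of_mem e he).1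
    exact ⟨.lvar (hts.pullback h hcov'), by
      rw [h.applySub_applySub_lvar hts hcov', hts.shift_eq_length]⟩
  | pair _ _ ihM ihN =>
    obtain ⟨hM', hM⟩ := ihM h fun m hm => hcov m (.pairl hm)
    obtain ⟨hN', hN⟩ := ihN h fun m hm => hcov m (.pairr hm)
    exact ⟨.pair hM' hN', by simp only [applySub, hM, hN]⟩
  | fst _ ih =>
    obtain ⟨hM', hM⟩ := ih h fun m hm => hcov m (.fst hm)
    exact ⟨.fst hM', by simp only [applySub, hM]⟩
  | snd _ ih =>
    obtain ⟨hM', hM⟩ := ih h fun m hm => hcov m (.snd hm)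
    exact ⟨.snd hM', by simp only [applySub, hM]⟩
  | lamL _ ih =>
    obtain ⟨hM', hM⟩ := ih (h.extSub .L _) (hcov.extSub (fun _ => .lamL) .L)
    rw [pullback_extSub h.one_le, length_extSub] at hM'
    rw [length_extSub, List.length_cons] at hM
    exact ⟨.lamL hM', by simp only [applySub, hM]⟩
  | lamA _ ih =>
    obtain ⟨hM', hM⟩ := ih (h.extSub .A _) (hcov.extSub (fun _ => .lamA) .A)
    rw [pullback_extSub h.one_le, length_extSub] at hM'
    rw [length_extSub, List.length_cons] at hM
    exact ⟨.lamA hM', by simp only [applySub, hM]⟩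
  | lamI _ ih =>
    obtain ⟨hM', hM⟩ := ih (h.extSub .I _) (hcov.extSub (fun _ => .lamI) .I)
    rw [pullback_extSub h.one_le, length_extSub] at hM'
    rw [length_extSub, List.length_cons] at hM
    exact ⟨.lamI hM', by simp only [applySub, hM]⟩
  | appL hs _ _ ihM ihN =>
    obtain ⟨hM', hM⟩ := ihM (h.split_left hs) fun m hm => hcov m (.appLl hm)
    obtain ⟨hN', hN⟩ := ihN (h.split_right hs) fun m hm => hcov m (.appLr hm)
    rw [hs.length_eq.1] at hM
    rw [hs.length_eq.2] at hN
    exact ⟨.appL (hs.pullback u) hM' hN', by simp only [applySub, hM, hN]⟩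
  | appA hs hnl _ _ ihM ihN =>
    obtain ⟨hM', hM⟩ := ihM (h.split_left hs) fun m hm => hcov m (.appAl hm)
    obtain ⟨hN', hN⟩ := ihN (h.split_right hs) fun m hm => hcov m (.appAr hm)
    rw [hs.length_eq.1] at hM
    rw [hs.length_eq.2] at hN
    exact ⟨.appA (hs.pullback u) (hnl.pullback u) hM' hN', by simp only [applySub, hM, hN]⟩
  | appI _ _ ihM ihN =>
    obtain ⟨hM', hM⟩ := ihM h fun m hm => hcov m (.appIl hm)
    obtain ⟨hN', hN⟩ := ihN h.bar fun m hm => hcov m (.appIr hm)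
    rw [length_bar] at hN
    rw [pullback_bar] at hN'
    exact ⟨.appI hM' hN', by simp only [applySub, hM, hN]⟩

theorem find?_zipIdx_swap {es : SubE} (hdist : es.Pairwise fun a b => a.1 ≠ b.1) {i : ℕ}
    {e : ℕ × Flag × Flag} (he : es[i]? = some e) (k : ℕ) :
    ((es.zipIdx k).map fun q => (q.2, q.1)).find? (fun p => p.2.1 = e.1) = some (k + i, e) := by
  induction es generalizing i k with
  | nil => simp at he
  | cons x es ih =>
    rw [List.zipIdx_cons, List.map_cons]
    cases i with
    | zero =>
      obtain rfl : x = e := by simpa using he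
      simp
    | succ i =>
      rw [List.getElem?_cons_succ] at he
      have hx : x.1 ≠ e.1 := List.rel_of_pairwise_cons hdist (List.mem_of_getElem? he)
      rw [List.find?_cons_of_neg (by simpa using hx), ih hdist.of_cons he (k + 1)]
      simp only [Nat.add_right_comm, Nat.add_assoc]

theorem getElem?_invSub {es : SubE} (hdist : es.Pairwise fun a b => a.1 ≠ b.1) {i n : ℕ}
    {e : ℕ × Flag × Flag} (he : es[i]? = some e) (hlt : e.1 - 1 < n) (hpos : 1 ≤ e.1) :
    (invSub es n)[e.1 - 1]? = some (i + 1, e.2.1, e.2.1) := by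
  have := find?_zipIdx_swap hdist he 0
  rw [Nat.zero_add] at this
  rw [invSub, List.getElem?_map, List.getElem?_range hlt, Option.map_some,
    Nat.sub_add_cancel hpos, this]

theorem SubTy.isPatternInverse_invSub {Γ Γ' : Ctx} {es : SubE} {n : ℕ} (h : SubTy Γ es n Γ')
    (hdist : es.Pairwise fun a b => a.1 ≠ b.1) : IsPatternInverse (invSub es Γ.length) es Γ where
  one_le e he := (h.exists_getElem?_of_mem e he).1
  exists_getElem? e he := (h.exists_getElem?_of_mem e he).2
  getElem?_inv hq := by
    obtain ⟨hpos, A, c, hΓ, -⟩ := h.exists_getElem?_of_mem _ (List.mem_of_getElem? hq)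
    exact getElem?_invSub hdist hq (List.getElem?_eq_some_iff.1 hΓ).1 hpos

theorem inversion_solves_general (ΓX : ℕ → Ctx) (AX : ℕ → Ty)
    (Γ Γ' : Ctx) (es : SubE) (sh : ℕ) (M : Tm) (A : Ty)
    (hpat : PatternSub es)
    (hty : SubTy Γ es sh Γ')
    (hstrong : ∀ Γ'', AffWeak Γ'' Γ' → SubTy Γ es sh Γ'' → Γ'' = Γ')
    (hM : HasTy ΓX AX Γ M A)
    (hocc : ∀ m, Occurs m M → ∃ e ∈ es, e.1 = m) :
    HasTy ΓX AX Γ' (applySub (invSub es Γ.length) es.length M) A ∧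
    applySub es sh (applySub (invSub es Γ.length) es.length M) = M := by
  rw [hty.eq_pullback hpat hstrong, hty.shift_eq_length]
  exact hM.pullback (hty.isPatternInverse_invSub hpat.1) fun m hm _ => hocc m hm

/-- Inversion solves pattern equations: under a strong typing of
    a pattern substitution s, if every logic variable of M has base type, X
    does not occur in M, and every variable of M occurs in s, then M[s⁻¹] is
    well-typed in the codomain of s and (M[s⁻¹])[s] = M, so X ← M[s⁻¹] solves
    X[s] ≐ M. -/
theorem inversion_solves (ΓX : ℕ → Ctx) (AX : ℕ → Ty)
    (Γ Γ' : Ctx) (es : SubE) (sh : ℕ) (M : Tm) (A : Ty) (X : ℕ)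
    (hpat : PatternSub es)
    (hty : SubTy Γ es sh Γ')
    (hstrong : ∀ Γ'', AffWeak Γ'' Γ' → SubTy Γ es sh Γ'' → Γ'' = Γ')
    (hM : HasTy ΓX AX Γ M A)
    (hbase : ∀ Y, HasLvar Y M → ∃ a, AX Y = Ty.base a)
    (hX : ¬ HasLvar X M)
    (hocc : ∀ m, Occurs m M → ∃ e ∈ es, e.1 = m) :
    HasTy ΓX AX Γ' (applySub (invSub es Γ.length) es.length M) A ∧
    applySub es sh (applySub (invSub es Γ.length) es.length M) = M :=
  inversion_solves_general ΓX AX Γ Γ' es sh M A hpat hty hstrong hM hocc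

end LinUnif
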